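/- In an SP-structure satisfying Symmetry, Non-negativity, Boundedness, O-Projection, and Factorization: if p(x,x') < 1, y is a state with p(y,x') = 0 and p(x,x') + p(x,y) = 1, and A is an ortho-set with p(x,A) = 0 and p(x',A) = 0, then p(y,A) = 0. -/

import Mathlib

variable {Ω : Type*}

def IsOrtho (p : Ω → Ω → ℝ) (A : Set Ω) : Prop :=
  ∀ x ∈ A, ∀ y ∈ A, x ≠ y → p x y = 0

noncomputable def pSet (p : Ω → Ω → ℝ) (x : Ω) (A : Set Ω) : ℝ :=
  ∑' a : A, p x a

def Symm (p : Ω → Ω → ℝ) : Prop := ∀ x y, p x y = p y x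

def Nonneg (p : Ω → Ω → ℝ) : Prop := ∀ x y, 0 ≤ p x y

def Bounded (p : Ω → Ω → ℝ) : Prop :=
  ∀ (x : Ω) (A : Set Ω), IsOrtho p A →
    Summable (fun a : A => p x a) ∧ pSet p x A ≤ 1

def OProj (p : Ω → Ω → ℝ) : Prop :=
  ∀ (x : Ω) (A : Set Ω), IsOrtho p A → pSet p x A < 1 →
    ∃ y, pSet p y A = 0 ∧ pSet p x A + p x y = 1

def Factor (p : Ω → Ω → ℝ) : Prop :=
  ∀ (x y z : Ω) (A : Set Ω), IsOrtho p A → pSet p y A = 1 → pSet p z A = 1 →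
    p x y = pSet p x A → p x z = p x y * p y z

def Subgen (p : Ω → Ω → ℝ) (A : Set Ω) : Set Ω := {x | pSet p x A = 1}

def IsSubspace (p : Ω → Ω → ℝ) (X : Set Ω) : Prop :=
  ∃ A, IsOrtho p A ∧ X = Subgen p A

def Standard (p : Ω → Ω → ℝ) : Prop := ∀ x y, p x y = 1 → x = y

section SPStructure

variable {p : Ω → Ω → ℝ}

lemma pSet_singleton (x w : Ω) : pSet p x {w} = p x w :=
  tsum_singleton w (p x)

lemma pSet_pair (u : Ω) {a b : Ω} (hab : a ≠ b) : pSet p u {a, b} = p u a + p u b := by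
  classical
  rw [pSet, ← Finset.coe_pair, Finset.tsum_subtype', Finset.sum_pair hab]

lemma isOrtho_singleton (w : Ω) : IsOrtho p {w} := by
  rintro a rfl b rfl hab
  exact absurd rfl hab

lemma isOrtho_pair (hp : Symm p) {a b : Ω} (hab : p a b = 0) : IsOrtho p {a, b} := by
  rintro u (rfl | rfl) v (rfl | rfl) huv
  exacts [absurd rfl huv, hab, hp u v ▸ hab, absurd rfl huv]

/-- The projection of `w` onto `{w}` cannot leave a remainder, since it would be orthogonal to
`w` itself. -/
lemma self_eq_one (hp : Symm p) (hb : Bounded p) (ho : OProj p) (w : Ω) : p w w = 1 := by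
  have hle : p w w ≤ 1 := pSet_singleton (p := p) w w ▸ (hb w {w} (isOrtho_singleton w)).2
  refine hle.eq_or_lt.resolve_right fun hlt => ?_
  obtain ⟨v, hv, hwv⟩ := ho w {w} (isOrtho_singleton w) (by rwa [pSet_singleton])
  rw [pSet_singleton] at hv hwv
  rw [hp w v, hv] at hwv
  linarith

lemma pSet_eq_zero_iff (hn : Nonneg p) (hb : Bounded p) {A : Set Ω} (hA : IsOrtho p A) (x : Ω) :
    pSet p x A = 0 ↔ ∀ a ∈ A, p x a = 0 := by
  rw [pSet, ← (hb x A hA).1.hasSum_iff, hasSum_zero_iff_of_nonneg fun a : A => hn x a]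
  simp [funext_iff]

/-- `C = {x', y}` is an ortho-set with `p(x, C) = p(y, C) = 1`, and `p(a, y) = p(a, C)` because `a`
is orthogonal to `x'`; so factorization through `y` gives `p a x = p a y * p y x`. -/
lemma eq_zero_of_orthogonal_of_pair (hp : Symm p) (hb : Bounded p) (ho : OProj p)
    (hf : Factor p) {x x' y a : Ω} (hyx' : p y x' = 0) (hsum : p x x' + p x y = 1)
    (hxy : p x y ≠ 0) (hax' : p a x' = 0) (hax : p a x = 0) : p a y = 0 := by
  have hyy := self_eq_one hp hb ho y
  have hne : x' ≠ y := by
    rintro rfl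
    rw [hyy] at hyx'
    exact one_ne_zero hyx'
  have hC := isOrtho_pair hp (hp x' y ▸ hyx')
  have hyC : pSet p y {x', y} = 1 := by rw [pSet_pair y hne, hyx', hyy, zero_add]
  have hxC : pSet p x {x', y} = 1 := by rw [pSet_pair x hne, hsum]
  have haC : p a y = pSet p a {x', y} := by rw [pSet_pair a hne, hax', zero_add]
  have hfac := hf a y x {x', y} hC hyC hxC haC
  rw [hax, hp y x] at hfac
  exact (mul_eq_zero.mp hfac.symm).resolve_right hxy

end SPStructure

theorem stmt10 (p : Ω → Ω → ℝ) (h1 : Symm p) (h2 : Nonneg p) (h3 : Bounded p)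
    (h4 : OProj p) (h5 : Factor p) (x x' y : Ω) (A : Set Ω)
    (hxx' : p x x' < 1) (hyx' : p y x' = 0) (hsum : p x x' + p x y = 1)
    (hA : IsOrtho p A) (hxA : pSet p x A = 0) (hx'A : pSet p x' A = 0) :
    pSet p y A = 0 := by
  rw [pSet_eq_zero_iff h2 h3 hA] at hxA hx'A ⊢
  have hxy : p x y ≠ 0 := by linarith
  intro a ha
  rw [h1]
  exact eq_zero_of_orthogonal_of_pair h1 h3 h4 h5 hyx' hsum hxy
    (h1 a x' ▸ hx'A a ha) (h1 a x ▸ hxA a ha)
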